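/- arXiv:0707.4610 — 7 statements merged into one kernel-verified Lean document; each statement's English description precedes it below -/
import Mathlib

section
/- Let B be the open unit ball of ℝⁿ and B̄ its closure. Let φ : ℝⁿ → ℝ be continuous, such that the restriction of φ to B is C¹ and φ|_B together with all its first-order partial derivatives extend continuously to B̄, and the restriction of φ to ℝⁿ∖B̄ is C¹ and its first-order partial derivatives extend continuously to ℝⁿ∖B. Then for every j ∈ {1,…,n} and every ψ ∈ C_c^∞(ℝⁿ), −∫_{ℝⁿ} φ(x) ∂ⱼψ(x) dx = ∫_B ∂ⱼφ(x) ψ(x) dx + ∫_{ℝⁿ∖B̄} ∂ⱼφ(x) ψ(x) dx. In other words, the j-th distributional derivative of φ is the locally integrable function which equals the classical derivative ∂ⱼφ on B and on ℝⁿ∖B̄. -/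
open MeasureTheory Metric Set

set_option maxHeartbeats 1000000

private lemma oneD {u w ψ : ℝ → ℝ} {a b : ℝ} (hab : a ≤ b)
    (hu : Continuous u) (hψ : ContDiff ℝ 1 ψ) (hψc : HasCompactSupport ψ)
    (h1 : ∀ t ∈ Set.Ioo a b, HasDerivAt u (w t) t)
    (h2 : ∀ t, t ∉ Set.Icc a b → HasDerivAt u (w t) t)
    (hwψ : Integrable (fun t => w t * ψ t)) :
    ∫ t, u t * deriv ψ t = - ∫ t, w t * ψ t := by
  obtain ⟨M, hM⟩ : ∃ M, tsupport ψ ⊆ closedBall 0 M := hψc.isBounded.subset_closedBall 0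
  set R : ℝ := max (max (|a|) (|b|)) (M + 1) with hR
  have hRa : -R ≤ a := by
    have : |a| ≤ R := le_trans (le_max_left _ _) (le_max_left _ _)
    linarith [neg_abs_le a]
  have hbR : b ≤ R := by
    have : |b| ≤ R := le_trans (le_max_right _ _) (le_max_left _ _)
    linarith [le_abs_self b]
  have hsupp : tsupport ψ ⊆ Ioo (-R) R := by
    intro x hx
    have hx' := hM hx
    simp only [mem_closedBall, dist_zero_right, Real.norm_eq_abs] at hx'
    have hMR : M + 1 ≤ R := le_max_right _ _
    cases' abs_le.1 hx' with h1' h2'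
    exact ⟨by linarith, by linarith⟩
  have hψR : ψ R = 0 := image_eq_zero_of_notMem_tsupport (fun h => by
    have := (hsupp h).2; linarith)
  have hψR' : ψ (-R) = 0 := image_eq_zero_of_notMem_tsupport (fun h => by
    have := (hsupp h).1; linarith)
  have hψ' : Continuous (deriv ψ) := hψ.continuous_deriv (by simp)
  have hψcont : Continuous ψ := hψ.continuous
  set f : ℝ → ℝ := fun t => u t * ψ t with hf
  set f' : ℝ → ℝ := fun t => w t * ψ t + u t * deriv ψ t with hf'
  have hfcont : Continuous f := hu.mul hψcont
  have huψ' : Integrable (fun t => u t * deriv ψ t) := by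
    exact (hu.mul hψ').integrable_of_hasCompactSupport hψc.deriv.mul_left
  have hf'int : ∀ c d : ℝ, IntervalIntegrable f' volume c d := fun c d =>
    hwψ.intervalIntegrable.add huψ'.intervalIntegrable
  have key : ∀ c d : ℝ, c ≤ d → (∀ t ∈ Ioo c d, HasDerivAt u (w t) t) →
      ∫ t in c..d, f' t = f d - f c := by
    intro c d hcd hder
    apply intervalIntegral.integral_eq_sub_of_hasDerivAt_of_le hcd
      (hfcont.continuousOn)
      (fun t ht => ((hder t ht).mul ((hψ.differentiable (by simp) t).hasDerivAt)))
      (hf'int c d)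
  have I1 : ∫ t in (-R)..a, f' t = f a - f (-R) :=
    key _ _ hRa (fun t ht => h2 t (fun h => by exact absurd h.1 (not_le.2 ht.2)))
  have I2 : ∫ t in a..b, f' t = f b - f a := key _ _ hab h1
  have I3 : ∫ t in b..R, f' t = f R - f b :=
    key _ _ hbR (fun t ht => h2 t (fun h => by exact absurd h.2 (not_le.2 ht.1)))
  have Itot : ∫ t in (-R)..R, f' t = 0 := by
    rw [← intervalIntegral.integral_add_adjacent_intervals (hf'int (-R) a) (hf'int a R),
        ← intervalIntegral.integral_add_adjacent_intervals (hf'int a b) (hf'int b R),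
        I1, I2, I3]
    simp only [hf, hψR, hψR', mul_zero]
    ring
  have hsplit : ∫ t in (-R)..R, f' t = (∫ t, w t * ψ t) + ∫ t, u t * deriv ψ t := by
    rw [intervalIntegral.integral_add hwψ.intervalIntegrable huψ'.intervalIntegrable]
    congr 1
    · exact intervalIntegral.integral_eq_integral_of_support_subset (by
        intro t ht
        have : ψ t ≠ 0 := fun h => by simp [h] at ht
        have h2 := hsupp (subset_tsupport _ this)
        exact ⟨h2.1, le_of_lt h2.2⟩)
    · exact intervalIntegral.integral_eq_integral_of_support_subset (by
        intro t ht
        have : deriv ψ t ≠ 0 := fun h => by simp [h] at ht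
        have h2 := hsupp (support_deriv_subset this)
        exact ⟨h2.1, le_of_lt h2.2⟩)
  linarith [Itot.symm.trans hsplit]

private lemma coordEq {m : ℕ} (j : Fin (m+1)) (t : ℝ) (y : Fin m → ℝ) :
    ((MeasurableEquiv.toLp 2 (Fin (m+1) → ℝ)).symm).symm (Fin.insertNth j t y)
      = ((MeasurableEquiv.toLp 2 (Fin (m+1) → ℝ)).symm).symm (Fin.insertNth j 0 y)
        + t • EuclideanSpace.single j (1:ℝ) := by
  ext i
  simp only [MeasurableEquiv.symm_symm, MeasurableEquiv.coe_toLp,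
    PiLp.add_apply, PiLp.smul_apply, EuclideanSpace.single_apply, smul_eq_mul]
  rcases eq_or_ne i j with rfl | hne
  · simp [Fin.insertNth_apply_same]
  · obtain ⟨k, rfl⟩ := Fin.exists_succAbove_eq hne
    simp [Fin.insertNth_apply_succAbove, Fin.succAbove_ne j k]

private lemma normSq {m : ℕ} (j : Fin (m+1)) (t : ℝ) (y : Fin m → ℝ) :
    ‖((MeasurableEquiv.toLp 2 (Fin (m+1) → ℝ)).symm).symm (Fin.insertNth j t y)‖^2
      = t^2 + ∑ k, (y k)^2 := by
  rw [EuclideanSpace.norm_eq, Real.sq_sqrt (by positivity)]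
  rw [Fin.sum_univ_succAbove
    (fun i => ‖((MeasurableEquiv.toLp 2 (Fin (m+1) → ℝ)).symm).symm (Fin.insertNth j t y) i‖^2) j]
  simp [MeasurableEquiv.symm_symm, MeasurableEquiv.coe_toLp,
    Fin.insertNth_apply_same, Fin.insertNth_apply_succAbove, Real.norm_eq_abs, sq_abs]

/-- Let `φ : ℝⁿ → ℝ` be continuous, `C¹` on the open unit ball `B` with first
derivatives extending continuously to `B̄`, and `C¹` on `ℝⁿ∖B̄` with first derivatives
extending continuously to `ℝⁿ∖B`. Then for every `j` and every test function `ψ`,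
`−∫ φ ∂ⱼψ = ∫_B ∂ⱼφ ψ + ∫_{ℝⁿ∖B̄} ∂ⱼφ ψ`; i.e. the `j`-th distributional derivative of `φ`
is the function given by the classical derivative on `B` and on `ℝⁿ∖B̄`. -/
theorem statement2 (n : ℕ) (φ : EuclideanSpace ℝ (Fin n) → ℝ)
    (hcont : Continuous φ)
    (hC1in : ContDiffOn ℝ 1 φ (ball (0 : EuclideanSpace ℝ (Fin n)) 1))
    (hC1out : ContDiffOn ℝ 1 φ (closure (ball (0 : EuclideanSpace ℝ (Fin n)) 1))ᶜ)
    (hextin : ∃ F : EuclideanSpace ℝ (Fin n) → (EuclideanSpace ℝ (Fin n) →L[ℝ] ℝ),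
      ContinuousOn F (closure (ball (0 : EuclideanSpace ℝ (Fin n)) 1)) ∧
        ∀ x ∈ ball (0 : EuclideanSpace ℝ (Fin n)) 1, fderiv ℝ φ x = F x)
    (hextout : ∃ G : EuclideanSpace ℝ (Fin n) → (EuclideanSpace ℝ (Fin n) →L[ℝ] ℝ),
      ContinuousOn G (ball (0 : EuclideanSpace ℝ (Fin n)) 1)ᶜ ∧
        ∀ x ∈ (closure (ball (0 : EuclideanSpace ℝ (Fin n)) 1))ᶜ, fderiv ℝ φ x = G x) :
    ∀ j : Fin n, ∀ ψ : EuclideanSpace ℝ (Fin n) → ℝ,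
      ContDiff ℝ (⊤ : ℕ∞) ψ → HasCompactSupport ψ →
      -∫ x, φ x * fderiv ℝ ψ x (EuclideanSpace.single j (1 : ℝ))
        = (∫ x in ball (0 : EuclideanSpace ℝ (Fin n)) 1,
            fderiv ℝ φ x (EuclideanSpace.single j (1 : ℝ)) * ψ x) +
          ∫ x in (closure (ball (0 : EuclideanSpace ℝ (Fin n)) 1))ᶜ,
            fderiv ℝ φ x (EuclideanSpace.single j (1 : ℝ)) * ψ x := by
  intro j ψ hψ hψc
  obtain ⟨F, hFc, hFe⟩ := hextin
  obtain ⟨G, hGc, hGe⟩ := hextout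
  obtain ⟨m, rfl⟩ : ∃ m, n = m + 1 := ⟨n - 1, (Nat.succ_pred_eq_of_pos j.pos).symm⟩
  have hcl : closure (ball (0 : EuclideanSpace ℝ (Fin (m+1))) 1) = closedBall 0 1 :=
    closure_ball 0 one_ne_zero
  rw [hcl] at hC1out hGe hFc ⊢
  set v : EuclideanSpace ℝ (Fin (m+1)) := EuclideanSpace.single j (1:ℝ) with hv
  classical
  set h : EuclideanSpace ℝ (Fin (m+1)) → ℝ :=
    (ball (0 : EuclideanSpace ℝ (Fin (m+1))) 1).piecewise (fun x => F x v) (fun x => G x v)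
    with hh
  have hball : ∀ x ∈ ball (0 : EuclideanSpace ℝ (Fin (m+1))) 1,
      h x = fderiv ℝ φ x v := fun x hx => by
    rw [hh, Set.piecewise_eq_of_mem _ _ _ hx, hFe x hx]
  have hout : ∀ x ∈ (closedBall (0 : EuclideanSpace ℝ (Fin (m+1))) 1)ᶜ,
      h x = fderiv ℝ φ x v := fun x hx => by
    have hx' : x ∉ ball (0 : EuclideanSpace ℝ (Fin (m+1))) 1 :=
      fun hb => hx (ball_subset_closedBall hb)
    rw [hh, Set.piecewise_eq_of_notMem _ _ _ hx', hGe x hx]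
  -- continuity of the two candidate derivative functions
  have hFv : ContinuousOn (fun x => F x v) (closedBall (0 : EuclideanSpace ℝ (Fin (m+1))) 1) :=
    (ContinuousLinearMap.apply ℝ ℝ v).continuous.comp_continuousOn hFc
  have hGv : ContinuousOn (fun x => G x v) (ball (0 : EuclideanSpace ℝ (Fin (m+1))) 1)ᶜ :=
    (ContinuousLinearMap.apply ℝ ℝ v).continuous.comp_continuousOn hGc
  -- integrability I1
  have hfderivψ : Continuous (fun x => fderiv ℝ ψ x v) :=
    (ContinuousLinearMap.apply ℝ ℝ v).continuous.comp (hψ.continuous_fderiv (by simp))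
  have hfψsupp : HasCompactSupport (fun x => fderiv ℝ ψ x v) :=
    (hψc.fderiv (𝕜 := ℝ)).comp_left (g := fun L : (EuclideanSpace ℝ (Fin (m+1)) →L[ℝ] ℝ) => L v) rfl
  have I1 : Integrable (fun x => φ x * fderiv ℝ ψ x v) :=
    (hcont.mul hfderivψ).integrable_of_hasCompactSupport hfψsupp.mul_left
  -- integrability I2
  have hmeas : AEStronglyMeasurable h (volume : Measure (EuclideanSpace ℝ (Fin (m+1)))) := by
    refine AEStronglyMeasurable.piecewise measurableSet_ball ?_ ?_
    · exact ((hFv.mono ball_subset_closedBall).aestronglyMeasurable measurableSet_ball)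
    · exact (hGv.aestronglyMeasurable measurableSet_ball.compl)
  have I2 : Integrable (fun x => h x * ψ x) := by
    have hsuppsub : Function.support (fun x => h x * ψ x) ⊆ tsupport ψ := fun x hx => by
      apply subset_tsupport
      intro h0
      simp [h0] at hx
    obtain ⟨C₁, hC₁⟩ := (isCompact_closedBall (0 : EuclideanSpace ℝ (Fin (m+1))) 1
      ).exists_bound_of_continuousOn hFv
    have hK2 : IsCompact (tsupport ψ ∩ (ball (0 : EuclideanSpace ℝ (Fin (m+1))) 1)ᶜ) :=
      hψc.inter_right isOpen_ball.isClosed_compl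
    obtain ⟨C₂, hC₂⟩ := hK2.exists_bound_of_continuousOn
      (hGv.mono (inter_subset_right))
    obtain ⟨Cψ, hCψ⟩ := hψc.exists_bound_of_continuousOn hψ.continuous.continuousOn
    have hbound : ∀ x, ‖h x * ψ x‖ ≤ (max (max C₁ C₂) 0) * (max Cψ 0) := by
      intro x
      by_cases hx : x ∈ tsupport ψ
      · rw [norm_mul]
        have h2 : ‖ψ x‖ ≤ max Cψ 0 := le_trans (hCψ x hx) (le_max_left _ _)
        have h1 : ‖h x‖ ≤ max (max C₁ C₂) 0 := by
          by_cases hb : x ∈ ball (0 : EuclideanSpace ℝ (Fin (m+1))) 1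
          · rw [hh, Set.piecewise_eq_of_mem _ _ _ hb]
            exact le_trans (hC₁ x (ball_subset_closedBall hb))
              (le_trans (le_max_left _ _) (le_max_left _ _))
          · rw [hh, Set.piecewise_eq_of_notMem _ _ _ hb]
            exact le_trans (hC₂ x ⟨hx, hb⟩)
              (le_trans (le_max_right _ _) (le_max_left _ _))
        exact mul_le_mul h1 h2 (norm_nonneg _) (le_trans (norm_nonneg _) h1)
      · have : ψ x = 0 := image_eq_zero_of_notMem_tsupport hx
        rw [this, mul_zero, norm_zero]
        positivity
    have hdom : Integrable ((tsupport ψ).indicator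
        (fun _ => (max (max C₁ C₂) 0) * (max Cψ 0))) := by
      rw [integrable_indicator_iff (isClosed_tsupport ψ).measurableSet]
      exact integrableOn_const hψc.measure_lt_top.ne
    refine Integrable.mono' hdom (hmeas.mul hψ.continuous.aestronglyMeasurable)
      (Filter.Eventually.of_forall fun x => ?_)
    by_cases hx : x ∈ tsupport ψ
    · rw [Set.indicator_of_mem hx]
      exact hbound x
    · rw [Set.indicator_of_notMem hx, image_eq_zero_of_notMem_tsupport hx, mul_zero, norm_zero]
  -- the distributional identity
  have key : ∫ x, φ x * fderiv ℝ ψ x v = - ∫ x, h x * ψ x := by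
    set q : (Fin (m+1) → ℝ) ≃ᵐ (ℝ × (Fin m → ℝ)) :=
      MeasurableEquiv.piFinSuccAbove (fun _ => ℝ) j with hq
    set e := (MeasurableEquiv.toLp 2 (Fin (m+1) → ℝ)).symm with he
    set Ψ : (ℝ × (Fin m → ℝ)) ≃ᵐ EuclideanSpace ℝ (Fin (m+1)) := q.symm.trans e.symm with hΨdef
    have hΨ : ∀ p : ℝ × (Fin m → ℝ), Ψ p = e.symm (Fin.insertNth j p.1 p.2) := fun p => rfl
    have mp : MeasurePreserving Ψ volume volume := by
      have h1 := (volume_preserving_piFinSuccAbove (fun _ : Fin (m+1) => ℝ) j).symm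
      have h2 := (EuclideanSpace.volume_preserving_symm_measurableEquiv_toLp (Fin (m+1))).symm
      exact h2.comp h1
    have comp_eq : ∀ g : EuclideanSpace ℝ (Fin (m+1)) → ℝ, ∫ x, g x = ∫ p, g (Ψ p) :=
      fun g => (mp.integral_comp Ψ.measurableEmbedding g).symm
    have intProd1 : Integrable (fun p : ℝ × (Fin m → ℝ) => φ (Ψ p) * fderiv ℝ ψ (Ψ p) v)
        ((volume : Measure ℝ).prod volume) := by
      exact (mp.integrable_comp_emb Ψ.measurableEmbedding).mpr I1
    have intProd2 : Integrable (fun p : ℝ × (Fin m → ℝ) => h (Ψ p) * ψ (Ψ p))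
        ((volume : Measure ℝ).prod volume) := by
      exact (mp.integrable_comp_emb Ψ.measurableEmbedding).mpr I2
    have hopen : IsOpen (closedBall (0 : EuclideanSpace ℝ (Fin (m+1))) 1)ᶜ :=
      isClosed_closedBall.isOpen_compl
    have inner : ∀ᵐ y : (Fin m → ℝ), (∫ t, φ (Ψ (t, y)) * fderiv ℝ ψ (Ψ (t, y)) v)
        = -(∫ t, h (Ψ (t, y)) * ψ (Ψ (t, y))) := by
      filter_upwards [intProd2.prod_left_ae] with y hy
      set c := Ψ (0, y) with hc
      have hline : ∀ t : ℝ, Ψ (t, y) = c + t • v := by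
        intro t
        rw [hΨ, hc, hΨ]
        exact coordEq j t y
      have hnormSq : ∀ t : ℝ, ‖Ψ (t, y)‖^2 = t^2 + ∑ k, (y k)^2 := fun t => by
        rw [hΨ]; exact normSq j t y
      set S := ∑ k, (y k)^2 with hS
      set r := Real.sqrt (max (1 - S) 0) with hrdef
      have hr0 : 0 ≤ r := Real.sqrt_nonneg _
      have hr2 : r^2 = max (1 - S) 0 := Real.sq_sqrt (le_max_right _ _)
      have hmem1 : ∀ t ∈ Ioo (-r) r, Ψ (t, y) ∈ ball (0 : EuclideanSpace ℝ (Fin (m+1))) 1 := by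
        intro t ht
        rw [mem_ball_zero_iff]
        have h1 : t^2 < r^2 := by nlinarith [ht.1, ht.2]
        have h3 : r^2 = 1 - S := by
          rcases max_cases (1 - S) 0 with ⟨h4, _⟩ | ⟨h4, h5⟩
          · rw [hr2, h4]
          · exfalso; nlinarith [sq_nonneg t]
        nlinarith [hnormSq t, norm_nonneg (Ψ (t, y))]
      have hmem2 : ∀ t, t ∉ Icc (-r) r →
          Ψ (t, y) ∈ (closedBall (0 : EuclideanSpace ℝ (Fin (m+1))) 1)ᶜ := by
        intro t ht
        simp only [mem_compl_iff, mem_closedBall_zero_iff, not_le]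
        rw [Set.mem_Icc, not_and_or, not_le, not_le] at ht
        have h1 : r^2 < t^2 := by rcases ht with ht | ht <;> nlinarith
        have h2 : 1 - S ≤ r^2 := by rw [hr2]; exact le_max_left _ _
        nlinarith [hnormSq t, norm_nonneg (Ψ (t, y))]
      have hlineDeriv : ∀ t : ℝ, HasDerivAt (fun s : ℝ => c + s • v) v t := fun t => by
        simpa using ((hasDerivAt_id t).smul_const v).const_add c
      have hψc1 : HasCompactSupport (fun t : ℝ => ψ (c + t • v)) := by
        obtain ⟨M, hM⟩ := hψc.isBounded.subset_closedBall 0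
        have hvnorm : ‖v‖ = 1 := by rw [hv]; simp [EuclideanSpace.norm_single]
        have hsub : Function.support (fun t : ℝ => ψ (c + t • v)) ⊆ Icc (-(M + ‖c‖)) (M + ‖c‖) := by
          intro t ht
          have hmem : c + t • v ∈ tsupport ψ := subset_tsupport _ ht
          have hb := hM hmem
          rw [mem_closedBall_zero_iff] at hb
          have htri : ‖t • v‖ ≤ ‖c + t • v‖ + ‖c‖ := by
            simpa using norm_add_le (c + t • v) (-c)
          rw [norm_smul, hvnorm, mul_one, Real.norm_eq_abs] at htri
          have habs : |t| ≤ M + ‖c‖ := by linarith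
          exact abs_le.1 habs
        exact HasCompactSupport.intro isCompact_Icc (fun t ht => by
          by_contra h0
          exact ht (hsub h0))
      have hu : Continuous (fun t : ℝ => φ (c + t • v)) :=
        hcont.comp (continuous_const.add (continuous_id.smul continuous_const))
      have haff : ContDiff ℝ 1 (fun t : ℝ => c + t • v) :=
        contDiff_const.add ((contDiff_id (𝕜 := ℝ) (E := ℝ)).smul contDiff_const)
      have hψ1 : ContDiff ℝ 1 (fun t : ℝ => ψ (c + t • v)) :=
        (hψ.of_le (by simp)).comp haff
      have h1' : ∀ t ∈ Ioo (-r) r, HasDerivAt (fun s : ℝ => φ (c + s • v)) (h (Ψ (t, y))) t := by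
        intro t ht
        have hx := hmem1 t ht
        have hdφ : DifferentiableAt ℝ φ (Ψ (t, y)) :=
          (hC1in.differentiableOn (by simp)).differentiableAt (isOpen_ball.mem_nhds hx)
        have hcomp : HasDerivAt (fun s : ℝ => φ (c + s • v)) (fderiv ℝ φ (Ψ (t, y)) v) t := by
          have hdφ' := hdφ.hasFDerivAt
          rw [hline t] at hdφ'
          have hcc := hdφ'.comp_hasDerivAt t (hlineDeriv t)
          rw [← hline t] at hcc
          exact hcc
        rw [hball _ hx]
        exact hcomp
      have h2' : ∀ t, t ∉ Icc (-r) r → HasDerivAt (fun s : ℝ => φ (c + s • v)) (h (Ψ (t, y))) t := by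
        intro t ht
        have hx := hmem2 t ht
        have hdφ : DifferentiableAt ℝ φ (Ψ (t, y)) :=
          (hC1out.differentiableOn (by simp)).differentiableAt (hopen.mem_nhds hx)
        have hcomp : HasDerivAt (fun s : ℝ => φ (c + s • v)) (fderiv ℝ φ (Ψ (t, y)) v) t := by
          have hdφ' := hdφ.hasFDerivAt
          rw [hline t] at hdφ'
          have hcc := hdφ'.comp_hasDerivAt t (hlineDeriv t)
          rw [← hline t] at hcc
          exact hcc
        rw [hout _ hx]
        exact hcomp
      have hwψ' : Integrable (fun t : ℝ => h (Ψ (t, y)) * ψ (c + t • v)) := by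
        have heq : (fun t : ℝ => h (Ψ (t, y)) * ψ (c + t • v))
            = fun t => h (Ψ (t, y)) * ψ (Ψ (t, y)) := by
          funext t; rw [hline t]
        rw [heq]; exact hy
      have main := oneD (by linarith : -r ≤ r) hu hψ1 hψc1 h1' h2' hwψ'
      have hLHS : (fun t => φ (Ψ (t, y)) * fderiv ℝ ψ (Ψ (t, y)) v)
          = fun t : ℝ => φ (c + t • v) * deriv (fun s : ℝ => ψ (c + s • v)) t := by
        funext t
        have hd : HasDerivAt (fun s : ℝ => ψ (c + s • v)) (fderiv ℝ ψ (Ψ (t, y)) v) t := by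
          have hdψ := ((hψ.differentiable (by simp)) (c + t • v)).hasFDerivAt
          have hcc := hdψ.comp_hasDerivAt t (hlineDeriv t)
          rw [← hline t] at hcc
          exact hcc
        rw [hd.deriv, hline t]
      have hRHSfun : (fun t => h (Ψ (t, y)) * ψ (Ψ (t, y)))
          = fun t : ℝ => h (Ψ (t, y)) * ψ (c + t • v) := by
        funext t; rw [hline t]
      rw [hLHS, hRHSfun]
      exact main
    calc ∫ x, φ x * fderiv ℝ ψ x v
        = ∫ p, φ (Ψ p) * fderiv ℝ ψ (Ψ p) v := comp_eq _
      _ = ∫ y, ∫ t, φ (Ψ (t, y)) * fderiv ℝ ψ (Ψ (t, y)) v :=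
          integral_prod_symm _ intProd1
      _ = ∫ y, -(∫ t, h (Ψ (t, y)) * ψ (Ψ (t, y))) := integral_congr_ae inner
      _ = -∫ y, ∫ t, h (Ψ (t, y)) * ψ (Ψ (t, y)) := integral_neg _
      _ = -∫ p, h (Ψ p) * ψ (Ψ p) :=
          congrArg Neg.neg (integral_prod_symm _ intProd2).symm
      _ = -∫ x, h x * ψ x := congrArg Neg.neg (comp_eq (fun x => h x * ψ x)).symm
  -- assembling the right-hand side
  have e1 : ∫ x in ball (0 : EuclideanSpace ℝ (Fin (m+1))) 1, fderiv ℝ φ x v * ψ x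
      = ∫ x in ball (0 : EuclideanSpace ℝ (Fin (m+1))) 1, h x * ψ x :=
    setIntegral_congr_fun measurableSet_ball (fun x hx => by rw [hball x hx])
  have e2 : ∫ x in (closedBall (0 : EuclideanSpace ℝ (Fin (m+1))) 1)ᶜ, fderiv ℝ φ x v * ψ x
      = ∫ x in (closedBall (0 : EuclideanSpace ℝ (Fin (m+1))) 1)ᶜ, h x * ψ x :=
    setIntegral_congr_fun measurableSet_closedBall.compl (fun x hx => by rw [hout x hx])
  have hunion : ball (0 : EuclideanSpace ℝ (Fin (m+1))) 1 ∪ (closedBall 0 1)ᶜ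
      = (sphere (0 : EuclideanSpace ℝ (Fin (m+1))) 1)ᶜ := by
    ext x
    simp only [mem_union, mem_ball_zero_iff, mem_compl_iff, mem_closedBall_zero_iff, not_le,
      mem_sphere_zero_iff_norm]
    constructor
    · rintro (h' | h') <;> intro he <;> rw [he] at h' <;> linarith
    · intro he
      rcases lt_or_gt_of_ne he with h' | h'
      · exact Or.inl h'
      · exact Or.inr h'
  haveI : Nontrivial (EuclideanSpace ℝ (Fin (m+1))) :=
    ⟨EuclideanSpace.single j (1:ℝ), 0, by
      intro hcon
      have := congrArg (fun z => ‖z‖) hcon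
      simp [EuclideanSpace.norm_single] at this⟩
  have hae : ((sphere (0 : EuclideanSpace ℝ (Fin (m+1))) 1)ᶜ : Set (EuclideanSpace ℝ (Fin (m+1))))
      =ᵐ[volume] (univ : Set (EuclideanSpace ℝ (Fin (m+1)))) := by
    rw [ae_eq_univ, compl_compl]
    exact Measure.addHaar_sphere (μ := (volume : Measure (EuclideanSpace ℝ (Fin (m+1))))) 0 1
  have hdisj : Disjoint (ball (0 : EuclideanSpace ℝ (Fin (m+1))) 1) (closedBall 0 1)ᶜ :=
    disjoint_compl_right.mono_left ball_subset_closedBall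
  rw [e1, e2, ← setIntegral_union hdisj measurableSet_closedBall.compl
    I2.integrableOn I2.integrableOn, hunion, setIntegral_congr_set hae, setIntegral_univ, key]
  ring
end

section
/- Let P be a harmonic polynomial on ℝⁿ, homogeneous of degree 2j with j ≥ 1, and write P(x) = Σ_α c_α x^α in multi-index notation. Denote by P(∂) the constant-coefficient differential operator Σ_α c_α ∂^α, where ∂^α = ∂₁^{α₁}⋯∂ₙ^{αₙ}. Let k be a non-negative integer and let f(x) = |x|^{2k} = (x₁²+⋯+xₙ²)^k. If 2j ≤ k, then for all x ∈ ℝⁿ, (P(∂)f)(x) = 2^{2j} · (k!/(k−2j)!) · P(x) · |x|^{2(k−2j)}. If 2j > k, then P(∂)f is identically zero. -/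
/-!
Since partial derivatives commute, `P ↦ P(∂)` is the algebra homomorphism sending `X i` to `∂ᵢ`.
Induct on the degree `m` of `P`. By Euler's identity `m • P = ∑ Xᵢ ∂ᵢP`, hence
`m • P(∂) f = ∑ ∂ᵢ ((∂ᵢP)(∂) f)`, and each `∂ᵢP` is again harmonic and homogeneous of degree
`m - 1`. By induction `(∂ᵢP)(∂) |x|^{2k} = c · ∂ᵢP · |x|^{2(k-m+1)}`; differentiating once more,
the Laplacian term vanishes and Euler's identity turns the remaining one into
`2 (k - m + 1) m · P · |x|^{2(k-m)}`. The resulting constant `2^m k (k-1) ⋯ (k-m+1)` is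
`2^m` times a descending factorial, which vanishes exactly when `m > k`.
-/

open MvPolynomial

/-- The constant-coefficient differential operator `P(∂) = Σ_α c_α ∂^α` associated to the
polynomial `P = Σ_α c_α x^α`, applied to the polynomial `f`. -/
noncomputable def mvDiffOp {n : ℕ} (P f : MvPolynomial (Fin n) ℝ) : MvPolynomial (Fin n) ℝ :=
  ∑ α ∈ P.support, P.coeff α •
    ((List.finRange n).foldr (fun i q => (fun r => pderiv i r)^[α i] q) f)

theorem Module.End.list_prod_map_apply_eq_foldr {R M ι : Type*} [Semiring R] [AddCommMonoid M]
    [Module R M] (g : ι → Module.End R M) (l : List ι) (f : M) :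
    (l.map g).prod f = l.foldr (fun i q => g i q) f := by
  induction l with
  | nil => rfl
  | cons i l ih => simp [ih]

namespace MvPolynomial

variable {σ R : Type*} [CommSemiring R]

theorem pderiv_pderiv_comm (i j : σ) (f : MvPolynomial σ R) :
    pderiv i (pderiv j f) = pderiv j (pderiv i f) := by
  classical
  induction f using MvPolynomial.induction_on with
  | C a => simp
  | add p q hp hq => simp [hp, hq]
  | mul_X p s hp =>
    simp only [Derivation.leibniz, pderiv_X, map_add, smul_eq_mul, hp, Pi.single_apply]
    split_ifs <;> simp <;> abel

variable (σ R) in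
noncomputable def pderivSubalgebra : Subalgebra R (Module.End R (MvPolynomial σ R)) :=
  Algebra.adjoin R (Set.range fun i => (pderiv i).toLinearMap)

instance : IsMulCommutative (pderivSubalgebra σ R) :=
  Algebra.isMulCommutative_adjoin R <| by
    rintro _ ⟨i, rfl⟩ _ ⟨j, rfl⟩
    exact LinearMap.ext fun f => pderiv_pderiv_comm i j f

open scoped IsMulCommutative in
/-- `P ↦ P(∂)`, built through the commutative subalgebra generated by the partial derivatives
because `aeval` needs a commutative target. -/
noncomputable def diffOp : MvPolynomial σ R →ₐ[R] Module.End R (MvPolynomial σ R) :=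
  (pderivSubalgebra σ R).val.comp <|
    aeval fun i => ⟨(pderiv i).toLinearMap, Algebra.subset_adjoin ⟨i, rfl⟩⟩

theorem diffOp_X (i : σ) : diffOp (X i : MvPolynomial σ R) = (pderiv i).toLinearMap := by
  simp [diffOp]

theorem diffOp_monomial_one {n : ℕ} (α : Fin n →₀ ℕ) :
    diffOp (monomial α (1 : R))
      = ((List.finRange n).map fun i => (pderiv i).toLinearMap ^ α i).prod := by
  rw [monomial_eq, C_1, one_mul, Finsupp.prod_fintype _ _ (fun i => pow_zero _), Fin.prod_univ_def,
    map_list_prod, List.map_map]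
  simp [Function.comp_def, diffOp_X]

section Laplacian

variable [Fintype σ]

noncomputable def laplacian (P : MvPolynomial σ R) : MvPolynomial σ R :=
  ∑ i, pderiv i (pderiv i P)

theorem laplacian_pderiv (i : σ) (P : MvPolynomial σ R) :
    laplacian (pderiv i P) = pderiv i (laplacian P) := by
  simp only [laplacian, map_sum, pderiv_pderiv_comm i]

theorem pderiv_sum_X_sq (i : σ) : pderiv i (∑ j, X j ^ 2 : MvPolynomial σ R) = 2 * X i := by
  classical
  simp [pderiv_X, Pi.single_apply, mul_comm]

theorem sum_pderiv_pderiv_mul_sum_X_sq_pow (F : MvPolynomial σ R) (l : ℕ) :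
    ∑ i, pderiv i (pderiv i F * (∑ j, X j ^ 2) ^ l)
      = laplacian F * (∑ j, X j ^ 2) ^ l
        + 2 * (l : MvPolynomial σ R) * (∑ i, X i * pderiv i F) * (∑ j, X j ^ 2) ^ (l - 1) := by
  calc ∑ i, pderiv i (pderiv i F * (∑ j, X j ^ 2) ^ l)
      = ∑ i, (pderiv i (pderiv i F) * (∑ j, X j ^ 2) ^ l
          + 2 * (l : MvPolynomial σ R) * (X i * pderiv i F) * (∑ j, X j ^ 2) ^ (l - 1)) := by
        refine Finset.sum_congr rfl fun i _ => ?_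
        rw [Derivation.leibniz, Derivation.leibniz_pow, pderiv_sum_X_sq, smul_eq_mul, smul_eq_mul,
          nsmul_eq_mul]
        ring
    _ = _ := by rw [Finset.sum_add_distrib, laplacian, Finset.sum_mul, Finset.mul_sum, Finset.sum_mul]

theorem diffOp_sum_X_sq_pow [IsAddTorsionFree R] {m : ℕ}
    {P : MvPolynomial σ R} (hP : laplacian P = 0) (hhom : P.IsHomogeneous m) (k : ℕ) :
    diffOp P ((∑ i, X i ^ 2) ^ k)
      = (2 ^ m * k.descFactorial m) • (P * (∑ i, X i ^ 2) ^ (k - m)) := by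
  induction m generalizing P with
  | zero =>
    obtain ⟨c, rfl⟩ : ∃ c, P = C c :=
      ⟨_, totalDegree_eq_zero_iff_eq_C.mp ((totalDegree_zero_iff_isHomogeneous σ).2 hhom)⟩
    simp [smul_eq_C_mul]
  | succ m ih =>
    set Q : MvPolynomial σ R := ∑ i, X i ^ 2
    have hderiv (i : σ) : diffOp (pderiv i P) (Q ^ k)
        = (2 ^ m * k.descFactorial m) • (pderiv i P * Q ^ (k - m)) :=
      ih (by rw [laplacian_pderiv, hP, map_zero]) (by simpa using hhom.pderiv)
    refine smul_right_injective _ m.succ_ne_zero ?_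
    calc (m + 1) • diffOp P (Q ^ k)
        = diffOp (∑ i, X i * pderiv i P) (Q ^ k) := by
          rw [hhom.sum_X_mul_pderiv, map_nsmul, LinearMap.smul_apply]
      _ = (2 ^ m * k.descFactorial m) • ∑ i, pderiv i (pderiv i P * Q ^ (k - m)) := by
          simp only [map_sum, map_mul, LinearMap.sum_apply, Module.End.mul_apply, diffOp_X, hderiv,
            Derivation.coeFn_coe, map_nsmul, Finset.smul_sum]
      _ = _ := by
          rw [sum_pderiv_pderiv_mul_sum_X_sq_pow, hP, hhom.sum_X_mul_pderiv, Nat.descFactorial_succ,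
            show k - m - 1 = k - (m + 1) by omega]
          simp only [nsmul_eq_mul]
          push_cast
          ring

end Laplacian

end MvPolynomial

theorem mvDiffOp_eq_diffOp {n : ℕ} (P f : MvPolynomial (Fin n) ℝ) : mvDiffOp P f = diffOp P f := by
  have hmonomial (α : Fin n →₀ ℕ) :
      (List.finRange n).foldr (fun i q => (fun r => pderiv i r)^[α i] q) f
        = diffOp (monomial α 1) f := by
    simp [diffOp_monomial_one, Module.End.list_prod_map_apply_eq_foldr, Module.End.pow_apply]
  conv_rhs => rw [P.as_sum]
  simp only [mvDiffOp, hmonomial, map_sum, LinearMap.sum_apply]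
  refine Finset.sum_congr rfl fun α _ => ?_
  rw [← LinearMap.smul_apply, ← map_smul, smul_monomial, smul_eq_mul, mul_one]

theorem statement4_general (n : ℕ) (j k : ℕ) (P : MvPolynomial (Fin n) ℝ)
    (hharm : ∑ i : Fin n, pderiv i (pderiv i P) = 0)
    (hhom : P.IsHomogeneous (2 * j)) :
    (2 * j ≤ k →
      ∀ x : Fin n → ℝ,
        eval x (mvDiffOp P ((∑ i : Fin n, X i ^ 2) ^ k))
          = 2 ^ (2 * j) * ((Nat.factorial k : ℝ) / (Nat.factorial (k - 2 * j) : ℝ)) *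
              eval x P * (∑ i : Fin n, x i ^ 2) ^ (k - 2 * j)) ∧
    (2 * j > k → mvDiffOp P ((∑ i : Fin n, X i ^ 2) ^ k) = 0) := by
  have hP := diffOp_sum_X_sq_pow (P := P) hharm hhom k
  refine ⟨fun hle x => ?_, fun hgt => ?_⟩
  · have hdesc : (k.descFactorial (2 * j) : ℝ) = k.factorial / (k - 2 * j).factorial := by
      rw [eq_div_iff (by positivity), mul_comm]
      exact_mod_cast Nat.factorial_mul_descFactorial hle
    simp [mvDiffOp_eq_diffOp, hP, nsmul_eq_mul, hdesc, mul_assoc]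
  · rw [mvDiffOp_eq_diffOp, hP, Nat.descFactorial_eq_zero_iff_lt.mpr hgt, mul_zero, zero_smul]

/-- Let `P` be a harmonic polynomial on `ℝⁿ`, homogeneous of degree `2j`,
`j ≥ 1`, and let `f(x) = |x|^{2k}`. If `2j ≤ k` then
`(P(∂)f)(x) = 2^{2j} (k!/(k−2j)!) P(x) |x|^{2(k−2j)}` for all `x`; if `2j > k` then
`P(∂)f = 0`. -/
theorem statement4 (n : ℕ) (j k : ℕ) (hj : 1 ≤ j) (P : MvPolynomial (Fin n) ℝ)
    (hharm : ∑ i : Fin n, pderiv i (pderiv i P) = 0)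
    (hhom : P.IsHomogeneous (2 * j)) :
    (2 * j ≤ k →
      ∀ x : Fin n → ℝ,
        eval x (mvDiffOp P ((∑ i : Fin n, X i ^ 2) ^ k))
          = 2 ^ (2 * j) * ((Nat.factorial k : ℝ) / (Nat.factorial (k - 2 * j) : ℝ)) *
              eval x P * (∑ i : Fin n, x i ^ 2) ^ (k - 2 * j)) ∧
    (2 * j > k → mvDiffOp P ((∑ i : Fin n, X i ^ 2) ^ k) = 0) :=
  statement4_general n j k P hharm hhom
end

section
/- Let n ≥ 2 and let σ be the normalized surface measure on the unit sphere S^{n−1} ⊂ ℝⁿ (so σ(S^{n−1}) = 1). There exists a constant C depending only on n such that for every integer q ≥ 1 and every polynomial Q on ℝⁿ homogeneous of degree q, sup_{x ∈ S^{n−1}} |Q(x)| ≤ C · q^{(n−1)/2} · (∫_{S^{n−1}} Q(x)² dσ(x))^{1/2}. -/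
open MeasureTheory Metric

/-- The normalized (rotation-invariant probability) surface measure on the unit sphere
of `ℝⁿ`. -/
noncomputable def sphereProbMeasure (n : ℕ) :
    Measure (sphere (0 : EuclideanSpace ℝ (Fin n)) 1) :=
  ((volume : Measure (EuclideanSpace ℝ (Fin n))).toSphere Set.univ)⁻¹ •
    (volume : Measure (EuclideanSpace ℝ (Fin n))).toSphere

/-!
The restrictions to the unit sphere of the homogeneous polynomials of degree `q` form a space `F`
of dimension at most `(n + q - 1).choose q ≤ (n q) ^ (n - 1)`, invariant under rotations. If `eᵢ`
is an `L²(σ)`-orthonormal basis of `F`, Cauchy–Schwarz gives `f(x)² ≤ K(x) ‖f‖²` for `f ∈ F`, with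
`K = ∑ eᵢ²`. Since the rotations act transitively on the sphere and preserve both `σ` and `F`, the
function `K` is constant, and integrating it shows that this constant is `dim F`.
-/

open MvPolynomial Module Submodule
open scoped RealInnerProductSpace

theorem Nat.add_sub_one_choose_le_mul_pow {n q : ℕ} (hn : 1 ≤ n) (hq : 1 ≤ q) :
    (n + q - 1).choose q ≤ (n * q) ^ (n - 1) := by
  obtain ⟨k, rfl⟩ := Nat.exists_eq_add_of_le' hn
  calc (k + 1 + q - 1).choose q = (q + k).choose k := by
        rw [show k + 1 + q - 1 = q + k by omega, Nat.choose_symm_add]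
    _ ≤ (q + k) ^ k := Nat.choose_le_pow _ _
    _ ≤ ((k + 1) * q) ^ (k + 1 - 1) := by
        rw [Nat.add_sub_cancel]; gcongr; nlinarith

theorem MvPolynomial.finrank_homogeneousSubmodule {σ K : Type*} [Fintype σ] [Field K] (q : ℕ) :
    finrank K (homogeneousSubmodule σ K q) = (Fintype.card σ + q - 1).choose q := by
  classical
  have hs : {d : σ →₀ ℕ | d.degree = q} = ↑((Finset.univ : Finset σ).finsuppAntidiag q) := by
    ext d; simp [Finset.mem_finsuppAntidiag, Finsupp.degree_eq_sum]
  rw [homogeneousSubmodule_eq_finsupp_supported, hs,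
    (AddMonoidAlgebra.supportedEquivFinsupp _).finrank_eq, finrank_finsupp_self]
  simp [Finset.card_finsuppAntidiag_nat_eq_choose]

instance {σ K : Type*} [Finite σ] [Field K] (q : ℕ) :
    FiniteDimensional K (homogeneousSubmodule σ K q) :=
  Module.Finite.iff_fg.mpr (homogeneousSubmodule_fg _ _ q)

theorem EuclideanSpace.linearMap_apply_eq_sum {ι : Type*} [Fintype ι] [DecidableEq ι]
    (R : EuclideanSpace ℝ ι →ₗ[ℝ] EuclideanSpace ℝ ι) (y : EuclideanSpace ℝ ι)
    (i : ι) : R y i = ∑ j, R (EuclideanSpace.single j 1) i * y j := by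
  conv_lhs => rw [← (EuclideanSpace.basisFun ι ℝ).sum_repr y]
  simp [mul_comm]

theorem MvPolynomial.IsHomogeneous.exists_eval_comp {ι : Type*} [Fintype ι] [DecidableEq ι]
    {q : ℕ} {P : MvPolynomial ι ℝ} (hP : P.IsHomogeneous q)
    (R : EuclideanSpace ℝ ι →ₗ[ℝ] EuclideanSpace ℝ ι) :
    ∃ P' : MvPolynomial ι ℝ, P'.IsHomogeneous q ∧
      ∀ y : EuclideanSpace ℝ ι, eval (fun i ↦ y i) P' = eval (fun i ↦ R y i) P := by
  refine ⟨MvPolynomial.aeval (fun i ↦ ∑ j, C (R (EuclideanSpace.single j 1) i) * X j) P, ?_,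
    fun y ↦ ?_⟩
  · simpa only [one_mul] using
      hP.aeval (n := 1) _ fun i ↦ .sum _ _ _ fun j _ ↦ isHomogeneous_C_mul_X _ _
  · change MvPolynomial.aeval (fun i ↦ y i) (MvPolynomial.aeval _ P) =
      MvPolynomial.aeval (fun i ↦ R y i) P
    rw [comp_aeval_apply]
    congr 1
    ext i
    simp [EuclideanSpace.linearMap_apply_eq_sum R y i]

theorem Orthonormal.norm_sum_smul_sq {E ι : Type*} [NormedAddCommGroup E]
    [InnerProductSpace ℝ E] [Fintype ι] {v : ι → E} (hv : Orthonormal ℝ v) (c : ι → ℝ) :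
    ‖∑ i, c i • v i‖ ^ 2 = ∑ i, c i ^ 2 := by
  rw [← real_inner_self_eq_norm_sq, sum_inner]
  simp only [inner_smul_left, hv.inner_right_fintype, RCLike.conj_to_real, sq]

section ContinuousFunctions

variable {X : Type*} [TopologicalSpace X] [CompactSpace X] [MeasurableSpace X] [BorelSpace X]
  {μ : Measure X}

local notation "L2" => ContinuousMap.toLp (E := ℝ) 2 μ ℝ

theorem ContinuousMap.norm_toLp_sq [IsFiniteMeasure μ] (f : C(X, ℝ)) :
    ‖L2 f‖ ^ 2 = ∫ x, f x ^ 2 ∂μ := by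
  rw [← real_inner_self_eq_norm_sq, ContinuousMap.inner_toLp]
  simp [sq]

theorem ContinuousMap.inner_toLp_comp [IsFiniteMeasure μ] {g : C(X, X)}
    (hg : MeasurePreserving g μ μ) (f h : C(X, ℝ)) :
    ⟪L2 (f.comp g), L2 (h.comp g)⟫ = ⟪L2 f, L2 h⟫ := by
  simp only [ContinuousMap.inner_toLp, RCLike.conj_to_real]
  conv_rhs => rw [← hg.map_eq]
  rw [integral_map hg.aemeasurable (by fun_prop)]
  rfl

theorem sq_apply_le_sum_sq_mul_norm_toLp_sq [IsFiniteMeasure μ] {ι : Type*} [Fintype ι]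
    {e : ι → C(X, ℝ)} (he : Orthonormal ℝ fun i ↦ L2 (e i)) {f : C(X, ℝ)}
    (hf : f ∈ span ℝ (Set.range e)) (x : X) :
    f x ^ 2 ≤ (∑ i, e i x ^ 2) * ‖L2 f‖ ^ 2 := by
  obtain ⟨c, rfl⟩ := mem_span_range_iff_exists_fun ℝ |>.mp hf
  simp only [map_sum, map_smul, he.norm_sum_smul_sq, ContinuousMap.coe_sum,
    ContinuousMap.coe_smul, Finset.sum_apply, Pi.smul_apply, smul_eq_mul]
  rw [mul_comm]
  exact Finset.sum_mul_sq_le_sq_mul_sq _ _ _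

theorem sum_sq_apply_le_of_orthonormal [IsFiniteMeasure μ] {F : Submodule ℝ C(X, ℝ)} {K : ℝ}
    (hK : 0 ≤ K) {x : X} (hF : ∀ f ∈ F, f x ^ 2 ≤ K * ‖L2 f‖ ^ 2) {ι : Type*} [Fintype ι]
    {u : ι → C(X, ℝ)} (hu : ∀ i, u i ∈ F) (huo : Orthonormal ℝ fun i ↦ L2 (u i)) :
    ∑ i, u i x ^ 2 ≤ K := by
  set s := ∑ i, u i x ^ 2
  have hs : 0 ≤ s := by positivity
  -- Test the bound on `∑ uᵢ(x) uᵢ`: its value at `x` and its squared norm are both `s`.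
  have key := hF (∑ i, u i x • u i) (sum_mem fun i _ ↦ smul_mem F _ (hu i))
  simp only [map_sum, map_smul, huo.norm_sum_smul_sq, ContinuousMap.coe_sum,
    ContinuousMap.coe_smul, Finset.sum_apply, Pi.smul_apply, smul_eq_mul, ← sq] at key
  nlinarith

theorem exists_orthonormal_toLp_span_eq [IsFiniteMeasure μ] [μ.IsOpenPosMeasure]
    (F : Submodule ℝ C(X, ℝ)) [FiniteDimensional ℝ F] :
    ∃ e : Fin (finrank ℝ F) → C(X, ℝ), Orthonormal ℝ (fun i ↦ L2 (e i)) ∧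
      span ℝ (Set.range e) = F := by
  let V : Submodule ℝ (Lp ℝ 2 μ) := F.map (L2 : C(X, ℝ) →ₗ[ℝ] Lp ℝ 2 μ)
  let T : F ≃ₗ[ℝ] V := F.equivMapOfInjective _ (ContinuousMap.toLp_injective μ)
  let b : OrthonormalBasis (Fin (finrank ℝ F)) ℝ V :=
    (stdOrthonormalBasis ℝ V).reindex (finCongr T.finrank_eq.symm)
  refine ⟨fun i ↦ T.symm (b i), ?_, ?_⟩
  · have hTe : ∀ i, L2 (T.symm (b i)) = b i := fun i ↦
      congrArg Subtype.val (T.apply_symm_apply _)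
    simp only [hTe]
    exact b.orthonormal.comp_linearIsometry (subtypeₗᵢ _)
  · have he : (fun i ↦ (T.symm (b i) : C(X, ℝ))) = F.subtype ∘ b.toBasis.map T.symm := by
      ext1 i; simp
    rw [he, Set.range_comp, span_image, (b.toBasis.map T.symm).span_eq, map_subtype_top]

theorem sq_apply_le_finrank_mul_integral_sq [IsProbabilityMeasure μ] [μ.IsOpenPosMeasure]
    (F : Submodule ℝ C(X, ℝ)) [FiniteDimensional ℝ F]
    (htrans : ∀ x y : X, ∃ g : C(X, X), g x = y ∧ MeasurePreserving g μ μ ∧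
      ∀ f ∈ F, f.comp g ∈ F)
    {f : C(X, ℝ)} (hf : f ∈ F) (x : X) :
    f x ^ 2 ≤ finrank ℝ F * ∫ y, f y ^ 2 ∂μ := by
  obtain ⟨e, he, hspan⟩ := exists_orthonormal_toLp_span_eq (μ := μ) F
  set K : X → ℝ := fun y ↦ ∑ i, e i y ^ 2 with hK
  have hbound : ∀ y, ∀ f ∈ F, f y ^ 2 ≤ K y * ‖L2 f‖ ^ 2 := fun y f hf ↦
    sq_apply_le_sum_sq_mul_norm_toLp_sq he (hspan.symm ▸ hf) y
  have hK_comp_le : ∀ y (g : C(X, X)), MeasurePreserving g μ μ → (∀ f ∈ F, f.comp g ∈ F) →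
      K (g y) ≤ K y := fun y g hg hgF ↦
    sum_sq_apply_le_of_orthonormal (by positivity) (hbound y)
      (fun i ↦ hgF _ (hspan ▸ subset_span ⟨i, rfl⟩))
      (orthonormal_iff_ite.mpr fun i j ↦ by
        rw [ContinuousMap.inner_toLp_comp hg, orthonormal_iff_ite.mp he])
  have hK_const : ∀ y, K y = K x := fun y ↦ by
    obtain ⟨g, hgy, hg, hgF⟩ := htrans y x
    obtain ⟨g', hgx, hg', hgF'⟩ := htrans x y
    have h₁ := hK_comp_le y g hg hgF
    have h₂ := hK_comp_le x g' hg' hgF'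
    rw [hgy] at h₁
    rw [hgx] at h₂
    exact le_antisymm h₂ h₁
  have hKx : K x = finrank ℝ F := by
    have hint : ∫ y, K y ∂μ = finrank ℝ F := by
      have hint_sq : ∀ i, Integrable (fun y ↦ e i y ^ 2) μ := fun i ↦ by
        exact (BoundedContinuousFunction.mkOfCompact (e i ^ 2)).integrable μ
      rw [hK, integral_finsetSum _ fun i _ ↦ hint_sq i]
      simp [← ContinuousMap.norm_toLp_sq, he.1]
    rw [← hint, integral_congr_ae (Filter.Eventually.of_forall hK_const)]
    simp
  calc f x ^ 2 ≤ K x * ‖L2 f‖ ^ 2 := hbound x f hf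
    _ = finrank ℝ F * ∫ y, f y ^ 2 ∂μ := by rw [hKx, ContinuousMap.norm_toLp_sq]

end ContinuousFunctions

section Sphere

variable {E : Type*} [NormedAddCommGroup E]

noncomputable def LinearIsometryEquiv.restrictSphere [NormedSpace ℝ E] (R : E ≃ₗᵢ[ℝ] E) :
    C(sphere (0 : E) 1, sphere (0 : E) 1) :=
  ⟨fun y ↦ ⟨R y, by simp⟩, by fun_prop⟩

theorem LinearIsometryEquiv.image_val_preimage_restrictSphere [NormedSpace ℝ E] (R : E ≃ₗᵢ[ℝ] E)
    (s : Set (sphere (0 : E) 1)) :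
    ((↑) '' (R.restrictSphere ⁻¹' s) : Set E) = R ⁻¹' ((↑) '' s) := by
  ext z
  simp [restrictSphere]

theorem LinearIsometryEquiv.measurePreserving_restrictSphere [NormedSpace ℝ E]
    [MeasurableSpace E] [BorelSpace E] {μ : Measure E} (R : E ≃ₗᵢ[ℝ] E)
    (hR : MeasurePreserving R μ μ) :
    MeasurePreserving R.restrictSphere μ.toSphere μ.toSphere := by
  refine ⟨R.restrictSphere.continuous.measurable, Measure.ext fun s hs ↦ ?_⟩
  rw [Measure.map_apply R.restrictSphere.continuous.measurable hs,
    Measure.toSphere_apply' _ (hs.preimage R.restrictSphere.continuous.measurable),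
    Measure.toSphere_apply' _ hs, R.image_val_preimage_restrictSphere, ← R.symm_symm,
    ← R.symm.image_eq_preimage_symm, ← Set.image2_smul,
    ← Set.image_image2_distrib_right (fun r y ↦ R.symm.map_smul r y), Set.image2_smul,
    R.symm.image_eq_preimage_symm, R.symm_symm,
    hR.measure_preimage_emb R.toHomeomorph.measurableEmbedding]

theorem exists_restrictSphere_apply_eq [InnerProductSpace ℝ E] (x y : sphere (0 : E) 1) :
    ∃ R : E ≃ₗᵢ[ℝ] E, R.restrictSphere x = y :=
  ⟨reflection (ℝ ∙ ((x : E) - y))ᗮ, Subtype.ext (reflection_sub (by simp))⟩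

end Sphere

section SphereProbMeasure

variable {n : ℕ}

instance [NeZero n] : IsProbabilityMeasure (sphereProbMeasure n) :=
  ⟨by rw [sphereProbMeasure, Measure.smul_apply, smul_eq_mul, ENNReal.inv_mul_cancel
    (Measure.measure_univ_ne_zero.mpr (Measure.toSphere_ne_zero _)) (measure_ne_top _ _)]⟩

instance : (sphereProbMeasure n).IsOpenPosMeasure :=
  Measure.isOpenPosMeasure_smul _ (ENNReal.inv_ne_zero.mpr (measure_ne_top _ _))

theorem measurePreserving_restrictSphere_sphereProbMeasure
    (R : EuclideanSpace ℝ (Fin n) ≃ₗᵢ[ℝ] EuclideanSpace ℝ (Fin n)) :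
    MeasurePreserving R.restrictSphere (sphereProbMeasure n) (sphereProbMeasure n) := by
  have hR := R.measurePreserving_restrictSphere R.measurePreserving
  exact ⟨hR.measurable, by rw [sphereProbMeasure, Measure.map_smul, hR.map_eq]⟩

end SphereProbMeasure

noncomputable def MvPolynomial.restrictSphere (n : ℕ) :
    MvPolynomial (Fin n) ℝ →ₗ[ℝ] C(sphere (0 : EuclideanSpace ℝ (Fin n)) 1, ℝ) where
  toFun P := ⟨fun y ↦ eval (fun i ↦ (y : EuclideanSpace ℝ (Fin n)) i) P,
    (continuous_eval P).comp (continuous_pi fun i ↦ by fun_prop)⟩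
  map_add' P Q := by ext; simp
  map_smul' c P := by ext; simp

section HomogeneousPolynomialsOnSphere

variable {n : ℕ}

theorem comp_restrictSphere_mem_map_homogeneousSubmodule {q : ℕ}
    (R : EuclideanSpace ℝ (Fin n) ≃ₗᵢ[ℝ] EuclideanSpace ℝ (Fin n))
    {f : C(sphere (0 : EuclideanSpace ℝ (Fin n)) 1, ℝ)}
    (hf : f ∈ (homogeneousSubmodule (Fin n) ℝ q).map (MvPolynomial.restrictSphere n)) :
    f.comp R.restrictSphere ∈
      (homogeneousSubmodule (Fin n) ℝ q).map (MvPolynomial.restrictSphere n) := by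
  obtain ⟨P, hP, rfl⟩ := hf
  obtain ⟨P', hP', hP'_eval⟩ := IsHomogeneous.exists_eval_comp hP R.toLinearMap
  exact ⟨P', hP', by ext y; exact hP'_eval y⟩

theorem sq_eval_le_choose_mul_integral_sq [NeZero n] {q : ℕ} {Q : MvPolynomial (Fin n) ℝ}
    (hQ : Q.IsHomogeneous q) (x : sphere (0 : EuclideanSpace ℝ (Fin n)) 1) :
    eval (fun i ↦ (x : EuclideanSpace ℝ (Fin n)) i) Q ^ 2 ≤
      (n + q - 1).choose q * ∫ y, eval (fun i ↦ (y : EuclideanSpace ℝ (Fin n)) i) Q ^ 2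
        ∂(sphereProbMeasure n) := by
  set F := (homogeneousSubmodule (Fin n) ℝ q).map (MvPolynomial.restrictSphere n)
  have htrans : ∀ x y, ∃ g : C(_, _), g x = y ∧
      MeasurePreserving g (sphereProbMeasure n) (sphereProbMeasure n) ∧
      ∀ f ∈ F, f.comp g ∈ F := fun x y ↦ by
    obtain ⟨R, hR⟩ := exists_restrictSphere_apply_eq x y
    exact ⟨R.restrictSphere, hR, measurePreserving_restrictSphere_sphereProbMeasure R,
      fun f hf ↦ comp_restrictSphere_mem_map_homogeneousSubmodule R hf⟩
  have hfinrank : (finrank ℝ F : ℝ) ≤ (n + q - 1).choose q := by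
    have := finrank_map_le (MvPolynomial.restrictSphere n) (homogeneousSubmodule (Fin n) ℝ q)
    rw [finrank_homogeneousSubmodule, Fintype.card_fin] at this
    exact_mod_cast this
  calc _ ≤ finrank ℝ F * ∫ y, MvPolynomial.restrictSphere n Q y ^ 2 ∂(sphereProbMeasure n) :=
        sq_apply_le_finrank_mul_integral_sq F htrans ⟨Q, hQ, rfl⟩ x
    _ ≤ _ := mul_le_mul_of_nonneg_right hfinrank (integral_nonneg fun y ↦ sq_nonneg _)

end HomogeneousPolynomialsOnSphere

/-- There is a constant `C` depending only on `n ≥ 2` such that for every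
integer `q ≥ 1` and every homogeneous polynomial `Q` of degree `q` on `ℝⁿ`,
`sup_{S^{n-1}} |Q| ≤ C q^{(n−1)/2} (∫_{S^{n−1}} Q² dσ)^{1/2}`, `σ` being the normalized
surface measure on the unit sphere. -/
theorem statement6 (n : ℕ) (hn : 2 ≤ n) :
    ∃ C : ℝ, 0 < C ∧ ∀ (q : ℕ), 1 ≤ q → ∀ Q : MvPolynomial (Fin n) ℝ, Q.IsHomogeneous q →
      ∀ x ∈ sphere (0 : EuclideanSpace ℝ (Fin n)) 1,
        |MvPolynomial.eval (fun i => x i) Q|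
          ≤ C * (q : ℝ) ^ (((n : ℝ) - 1) / 2) *
            Real.sqrt (∫ y : sphere (0 : EuclideanSpace ℝ (Fin n)) 1,
              (MvPolynomial.eval (fun i => (y : EuclideanSpace ℝ (Fin n)) i) Q) ^ 2
                ∂(sphereProbMeasure n)) := by
  have : NeZero n := ⟨by omega⟩
  set r : ℝ := ((n : ℝ) - 1) / 2
  refine ⟨(n : ℝ) ^ r, by positivity, fun q hq Q hQ x hx ↦ ?_⟩
  have hchoose : ((n + q - 1).choose q : ℝ) ≤ (((n : ℝ) * q) ^ r) ^ 2 := by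
    rw [← Real.rpow_mul_natCast (by positivity), show r * (2 : ℕ) = ((n - 1 : ℕ) : ℝ) by
      push_cast [show 1 ≤ n by omega]; ring, Real.rpow_natCast]
    exact_mod_cast Nat.add_sub_one_choose_le_mul_pow (by omega) hq
  set I := ∫ y : sphere (0 : EuclideanSpace ℝ (Fin n)) 1,
    (MvPolynomial.eval (fun i => (y : EuclideanSpace ℝ (Fin n)) i) Q) ^ 2 ∂(sphereProbMeasure n)
  calc |MvPolynomial.eval (fun i => x i) Q| = √(MvPolynomial.eval (fun i => x i) Q ^ 2) :=
        (Real.sqrt_sq_eq_abs _).symm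
    _ ≤ √((n + q - 1).choose q * I) :=
        Real.sqrt_le_sqrt (sq_eval_le_choose_mul_integral_sq hQ ⟨x, hx⟩)
    _ ≤ √((((n : ℝ) * q) ^ r) ^ 2 * I) := by gcongr
    _ = _ := by
        rw [Real.sqrt_mul (by positivity), Real.sqrt_sq (by positivity),
          Real.mul_rpow (by positivity) (by positivity)]
end

section
/- Let n ≥ 1 and let f : ℝⁿ → ℝ be a continuous function which changes sign, that is, there exist points a, b ∈ ℝⁿ with f(a) > 0 and f(b) < 0. Then the zero set Z(f) = {x ∈ ℝⁿ : f(x) = 0} has positive (n−1)-dimensional Hausdorff measure: H^{n−1}(Z(f)) > 0. In particular, the Hausdorff dimension of Z(f) is at least n−1. -/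
/-!
Let `e = b - a` and let `P` be the orthogonal projection onto the hyperplane `eᗮ`. Since `f > 0`
near `a` and `f < 0` near `b`, for every small `v ∈ eᗮ` the segment from `a + v` to `b + v` meets
the zero set, and `P` maps that whole segment to `P a + v`. Hence `P` maps the zero set onto a set
containing a ball of the hyperplane, which has positive `(n - 1)`-dimensional Hausdorff measure,
and `P` is `1`-Lipschitz, so it does not increase Hausdorff measure.
-/

open MeasureTheory Metric Module

theorem exists_mem_segment_eq_zero {F : Type*} [AddCommGroup F] [Module ℝ F] [TopologicalSpace F]
    [IsTopologicalAddGroup F] [ContinuousSMul ℝ F] {f : F → ℝ} (hf : Continuous f) {x y : F}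
    (hx : 0 < f x) (hy : f y < 0) : ∃ z ∈ segment ℝ x y, f z = 0 :=
  (convex_segment x y).isPreconnected.intermediate_value₂ (right_mem_segment ℝ x y)
    (left_mem_segment ℝ x y) hf.continuousOn continuousOn_const hy.le hx.le

section InnerProductSpace

variable {E : Type*} [NormedAddCommGroup E] [InnerProductSpace ℝ E]

theorem orthogonalProjectionOnto_orthogonal_span_singleton_add_smul (e x : E) (t : ℝ) :
    (ℝ ∙ e)ᗮ.orthogonalProjectionOnto (x + t • e) = (ℝ ∙ e)ᗮ.orthogonalProjectionOnto x := by
  rw [map_add, map_smul, Submodule.orthogonalProjectionOnto_apply_of_mem_orthogonal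
    ((ℝ ∙ e).le_orthogonal_orthogonal (Submodule.mem_span_singleton_self e)), smul_zero, add_zero]

theorem ball_subset_image_orthogonalProjectionOnto_zeroSet {f : E → ℝ} (hf : Continuous f)
    {a b : E} {ε : ℝ} (ha : ∀ x ∈ ball a ε, 0 < f x) (hb : ∀ x ∈ ball b ε, f x < 0) :
    ball ((ℝ ∙ (b - a))ᗮ.orthogonalProjectionOnto a) ε ⊆
      (ℝ ∙ (b - a))ᗮ.orthogonalProjectionOnto '' {x | f x = 0} := by
  set P := (ℝ ∙ (b - a))ᗮ.orthogonalProjectionOnto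
  intro w hw
  set v : E := ↑(w - P a)
  have hv : ‖v‖ < ε := by simpa [v, dist_eq_norm] using hw
  obtain ⟨z, hz, hfz⟩ := exists_mem_segment_eq_zero hf
    (ha (a + v) (by simpa [dist_eq_norm] using hv)) (hb (b + v) (by simpa [dist_eq_norm] using hv))
  rw [segment_eq_image'] at hz
  obtain ⟨t, -, rfl⟩ := hz
  refine ⟨_, hfz, ?_⟩
  rw [add_sub_add_right_eq_sub, orthogonalProjectionOnto_orthogonal_span_singleton_add_smul,
    map_add, Submodule.orthogonalProjectionOnto_mem_subspace_eq_self, add_sub_cancel]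

theorem finrank_orthogonal_span_singleton_of_ne_zero [FiniteDimensional ℝ E] {e : E} (he : e ≠ 0) :
    (finrank ℝ (ℝ ∙ e)ᗮ : ℝ) = finrank ℝ E - 1 := by
  have h := Submodule.finrank_add_finrank_orthogonal (ℝ ∙ e)
  rw [finrank_span_singleton he] at h
  rw [← h]
  push_cast
  ring

theorem hausdorffMeasure_zeroSet_pos [FiniteDimensional ℝ E] [MeasurableSpace E] [BorelSpace E]
    {f : E → ℝ} (hf : Continuous f) {a b : E} (ha : 0 < f a) (hb : f b < 0) :
    0 < μH[finrank ℝ E - 1] {x | f x = 0} := by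
  have hba : b - a ≠ 0 := sub_ne_zero.2 fun h => (h ▸ hb).not_gt ha
  set K := (ℝ ∙ (b - a))ᗮ
  obtain ⟨εa, hεa, hfa⟩ := eventually_nhds_iff_ball.1 (hf.continuousAt.eventually_const_lt ha)
  obtain ⟨εb, hεb, hfb⟩ := eventually_nhds_iff_ball.1 (hf.continuousAt.eventually_lt_const hb)
  have hball := ball_subset_image_orthogonalProjectionOnto_zeroSet hf
    (fun x hx => hfa x (ball_subset_ball (min_le_left εa εb) hx))
    (fun x hx => hfb x (ball_subset_ball (min_le_right εa εb) hx))
  have hd : (0 : ℝ) ≤ finrank ℝ E - 1 := by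
    rw [← finrank_orthogonal_span_singleton_of_ne_zero hba]
    positivity
  calc (0 : ENNReal)
      < μH[finrank ℝ K] (ball (K.orthogonalProjectionOnto a) (min εa εb)) :=
        measure_ball_pos _ _ (lt_min hεa hεb)
    _ ≤ μH[finrank ℝ E - 1] (K.orthogonalProjectionOnto '' {x | f x = 0}) := by
        rw [finrank_orthogonal_span_singleton_of_ne_zero hba]
        exact measure_mono hball
    _ ≤ μH[finrank ℝ E - 1] {x | f x = 0} := by
        simpa using K.lipschitzWith_orthogonalProjectionOnto.hausdorffMeasure_image_le hd _

end InnerProductSpace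

theorem statement9_general (n : ℕ) (f : EuclideanSpace ℝ (Fin n) → ℝ)
    (hf : Continuous f) (a b : EuclideanSpace ℝ (Fin n)) (ha : 0 < f a) (hb : f b < 0) :
    0 < μH[(n : ℝ) - 1] {x : EuclideanSpace ℝ (Fin n) | f x = 0} := by
  simpa using hausdorffMeasure_zeroSet_pos hf ha hb

/-- If `n ≥ 1` and `f : ℝⁿ → ℝ` is continuous and changes sign, then its zero
set has positive `(n−1)`-dimensional Hausdorff measure. -/
theorem statement9 (n : ℕ) (hn : 1 ≤ n) (f : EuclideanSpace ℝ (Fin n) → ℝ)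
    (hf : Continuous f) (a b : EuclideanSpace ℝ (Fin n)) (ha : 0 < f a) (hb : f b < 0) :
    0 < μH[(n : ℝ) - 1] {x : EuclideanSpace ℝ (Fin n) | f x = 0} :=
  statement9_general n f hf a b ha hb
end

section
/- For every real number a and all integers N ≥ 1 and 0 ≤ L ≤ 2N−1, Σ_{i=L}^{2N−1} (−1)^i · binom(a, i) · binom(i, L) = (−1)^L · binom(a, L) · binom(2N−1−a, 2N−1−L). -/
/-!
The absorption identity `binom(a, i) binom(i, L) = binom(a, L) binom(a - L, i - L)` pulls
`binom(a, L)` out of the sum. What remains is a partial alternating sum of `binom(a - L, j)`,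
which Pascal's rule telescopes to `(-1)^m binom(a - L - 1, m)` with `m = 2N - 1 - L`, and upper
negation turns this into `binom(2N - 1 - a, m)`. All three facts hold for `Ring.choose` in any
binomial ring, and `rbinom` is `Ring.choose` on `ℝ`.
-/

/-- Generalized binomial coefficient `binom(x, r) = x(x-1)⋯(x-r+1)/r!` for a real
number `x` and a natural number `r`. -/
noncomputable def rbinom (x : ℝ) (r : ℕ) : ℝ :=
  (∏ i ∈ Finset.range r, (x - i)) / (Nat.factorial r)

open Finset Polynomial

theorem rbinom_eq_ringChoose (x : ℝ) (r : ℕ) : rbinom x r = Ring.choose x r := by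
  rw [Ring.choose_eq_smul, rbinom, ← descPochhammer_eval_eq_prod_range,
    ← descPochhammer_map (algebraMap ℤ ℝ), eval_map_algebraMap, aeval_eq_smeval, smul_eq_mul,
    div_eq_inv_mul]

namespace Ring

variable {R : Type*} [CommRing R] [BinomialRing R]

theorem sum_range_neg_one_pow_mul_choose_add_one (r : R) (m : ℕ) :
    ∑ j ∈ range (m + 1), (-1) ^ j * choose (r + 1) j = (-1) ^ m * choose r m := by
  induction m with
  | zero => simp
  | succ m ih =>
    rw [sum_range_succ, ih, choose_succ_succ]
    ring

theorem choose_natCast_sub (r : R) (n : ℕ) :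
    choose ((n : R) - r) n = (-1) ^ n * choose (r - 1) n := by
  rw [← neg_sub, choose_neg, sub_add_cancel, Int.negOnePow_def, Units.smul_def]
  simp

theorem sum_Icc_neg_one_pow_mul_choose_mul_choose (a : R) {L M : ℕ} (hLM : L ≤ M) :
    ∑ i ∈ Icc L M, (-1) ^ i * choose a i * (i.choose L : R)
      = (-1) ^ L * choose a L * choose ((M : R) - a) (M - L) := by
  obtain ⟨m, rfl⟩ := Nat.exists_eq_add_of_le hLM
  have absorb (j : ℕ) :
      choose a (L + j) * ((L + j).choose L : R) = choose a L * choose (a - L) j := by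
    rw [mul_comm, ← nsmul_eq_mul, choose_smul_choose a (Nat.le_add_right L j),
      Nat.add_sub_cancel_left]
  calc ∑ i ∈ Icc L (L + m), (-1) ^ i * choose a i * (i.choose L : R)
      = ∑ j ∈ range (m + 1), (-1) ^ L * choose a L * ((-1) ^ j * choose (a - L - 1 + 1) j) := by
        rw [← Ico_add_one_right_eq_Icc, sum_Ico_eq_sum_range,
          show L + m + 1 - L = m + 1 by omega]
        refine sum_congr rfl fun j _ => ?_
        rw [sub_add_cancel, mul_assoc, absorb, pow_add]
        ring
    _ = (-1) ^ L * choose a L * choose ((L + m : ℕ) - a) (L + m - L) := by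
        rw [← mul_sum, sum_range_neg_one_pow_mul_choose_add_one, Nat.add_sub_cancel_left,
          ← choose_natCast_sub]
        congr 2
        push_cast
        ring

end Ring

/-- For every real number `a` and all integers `N ≥ 1` and `0 ≤ L ≤ 2N−1`,
`Σ_{i=L}^{2N−1} (−1)^i · binom(a, i) · binom(i, L)
  = (−1)^L · binom(a, L) · binom(2N−1−a, 2N−1−L)`. -/
theorem statement13 (a : ℝ) (N L : ℕ) (hN : 1 ≤ N) (hL : L ≤ 2 * N - 1) :
    ∑ i ∈ Finset.Icc L (2 * N - 1), (-1 : ℝ) ^ i * rbinom a i * (Nat.choose i L : ℝ)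
      = (-1 : ℝ) ^ L * rbinom a L * rbinom (2 * N - 1 - a) (2 * N - 1 - L) := by
  have hM : ((2 * N - 1 : ℕ) : ℝ) = 2 * N - 1 := by
    rw [Nat.cast_sub (by omega), Nat.cast_mul, Nat.cast_ofNat, Nat.cast_one]
  simp only [rbinom_eq_ringChoose]
  rw [Ring.sum_Icc_neg_one_pow_mul_choose_mul_choose a hL, hM]
end

section
/- Let N ≥ 1 and 0 ≤ L ≤ 2N−1 be integers and let m be a real number with m > N − L. Then Σ_{i=L}^{2N−1} (Γ(i−N+m)/i!) · binom(i, L) = (Γ(L−N+m)/L!) · binom(N+m−1, 2N−1−L). -/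
open Finset Polynomial Nat

lemma rbinom_eq_descPochhammer_eval_div (x : ℝ) (r : ℕ) :
    rbinom x r = (descPochhammer ℝ r).eval x / r ! := by
  rw [rbinom, descPochhammer_eval_eq_prod_range]

lemma ascPochhammer_succ_eval_left {S : Type*} [CommSemiring S] (n : ℕ) (x : S) :
    (ascPochhammer S (n + 1)).eval x = x * (ascPochhammer S n).eval (x + 1) := by
  rw [ascPochhammer_succ_left, eval_mul, eval_X, eval_comp, eval_add, eval_X, eval_one]

theorem sum_range_ascPochhammer_eval_div_factorial {K : Type*} [Field K] [CharZero K]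
    (x : K) (n : ℕ) :
    ∑ j ∈ range (n + 1), (ascPochhammer K j).eval x / j ! =
      (ascPochhammer K n).eval (x + 1) / n ! := by
  induction n with
  | zero => simp
  | succ n ih =>
    rw [sum_range_succ, ih, ascPochhammer_succ_eval_left, ascPochhammer_succ_eval]
    have hn : (n ! : K) ≠ 0 := cast_ne_zero.2 n.factorial_ne_zero
    have hn1 : ((n + 1 : ℕ) : K) ≠ 0 := cast_ne_zero.2 n.succ_ne_zero
    rw [factorial_succ, cast_mul]
    field_simp
    push_cast
    ring

theorem Real.Gamma_add_nat_eq_mul_ascPochhammer_eval {x : ℝ} (hx : ∀ k : ℕ, x ≠ -k) (n : ℕ) :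
    Real.Gamma (x + n) = Real.Gamma x * (ascPochhammer ℝ n).eval x := by
  induction n with
  | zero => simp
  | succ n ih =>
    have hxn : x + n ≠ 0 := fun h => hx n (eq_neg_of_add_eq_zero_left h)
    rw [cast_succ, ← add_assoc, Real.Gamma_add_one hxn, ih, ascPochhammer_succ_eval]
    ring

lemma cast_add_choose_div_factorial {K : Type*} [Field K] [CharZero K] (L j : ℕ) :
    ((L + j).choose L : K) / (L + j) ! = 1 / (L ! * j !) := by
  rw [Nat.choose_symm_add, ← Nat.add_choose_mul_factorial_mul_factorial L j, cast_mul, cast_mul]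
  have hL : (L ! : K) ≠ 0 := cast_ne_zero.2 L.factorial_ne_zero
  have hj : (j ! : K) ≠ 0 := cast_ne_zero.2 j.factorial_ne_zero
  have hc : ((L + j).choose j : K) ≠ 0 := cast_ne_zero.2 (Nat.choose_pos (Nat.le_add_left j L)).ne'
  field_simp

theorem sum_Icc_Gamma_div_factorial_mul_choose {L K : ℕ} (hLK : L ≤ K) {a : ℝ}
    (ha : ∀ k : ℕ, (L : ℝ) + a ≠ -k) :
    ∑ i ∈ Icc L K, Real.Gamma ((i : ℝ) + a) / i ! * (i.choose L : ℝ) =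
      Real.Gamma ((L : ℝ) + a) / L ! * rbinom ((K : ℝ) + a) (K - L) := by
  obtain ⟨n, rfl⟩ := Nat.exists_eq_add_of_le hLK
  have hterm : ∀ j : ℕ, Real.Gamma (((L + j : ℕ) : ℝ) + a) / (L + j) ! * ((L + j).choose L : ℝ) =
      Real.Gamma ((L : ℝ) + a) / L ! * ((ascPochhammer ℝ j).eval ((L : ℝ) + a) / j !) := by
    intro j
    rw [mul_comm, ← mul_div_assoc, mul_div_right_comm, cast_add_choose_div_factorial,
      cast_add, add_right_comm, Real.Gamma_add_nat_eq_mul_ascPochhammer_eval ha]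
    ring
  have hdesc : (descPochhammer ℝ n).eval (((L + n : ℕ) : ℝ) + a) =
      (ascPochhammer ℝ n).eval ((L : ℝ) + a + 1) := by
    rw [descPochhammer_eval_eq_ascPochhammer]
    push_cast
    ring_nf
  rw [← Ico_add_one_right_eq_Icc, sum_Ico_eq_sum_range, show L + n + 1 - L = n + 1 by omega,
    Nat.add_sub_cancel_left]
  simp only [hterm]
  rw [← mul_sum, sum_range_ascPochhammer_eval_div_factorial, rbinom_eq_descPochhammer_eval_div,
    hdesc]

/-- Let `N ≥ 1` and `0 ≤ L ≤ 2N−1` be integers and let `m` be a real number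
with `m > N − L`. Then `Σ_{i=L}^{2N−1} (Γ(i−N+m)/i!) · binom(i, L)
  = (Γ(L−N+m)/L!) · binom(N+m−1, 2N−1−L)`. -/
theorem statement14 (N L : ℕ) (hN : 1 ≤ N) (hL : L ≤ 2 * N - 1) (m : ℝ)
    (hm : m > (N : ℝ) - L) :
    ∑ i ∈ Finset.Icc L (2 * N - 1),
        (Real.Gamma ((i : ℝ) - N + m) / (Nat.factorial i : ℝ)) * (Nat.choose i L : ℝ)
      = (Real.Gamma ((L : ℝ) - N + m) / (Nat.factorial L : ℝ)) *
          rbinom ((N : ℝ) + m - 1) (2 * N - 1 - L) := by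
  have hpos : 0 < (L : ℝ) + (m - N) := by linarith
  have hnotpole : ∀ k : ℕ, (L : ℝ) + (m - N) ≠ -k := fun k =>
    ((neg_nonpos.2 k.cast_nonneg).trans_lt hpos).ne'
  have hK : ((2 * N - 1 : ℕ) : ℝ) + (m - N) = N + m - 1 := by
    rw [Nat.cast_sub (by omega)]
    push_cast
    ring
  have hshift : ∀ i : ℕ, (i : ℝ) - N + m = i + (m - N) := fun i => by ring
  simp only [hshift]
  rw [sum_Icc_Gamma_div_factorial_mul_choose hL hnotpole, hK]
end

section
/- Let n ≥ 1 be an integer. With c^N_{l,j,k} defined as in the context, for all integers N ≥ 2 and 1 ≤ j ≤ N−1 one has Σ_{l=N+j}^{2N−1} c^N_{l, j, l−N−j} / (2^{m+l−N+j} · Γ(m+l−N+j+1)) = −(π^m/(V_n · 2^m · Γ(m+1))) · (−1)^j/(j · 4^j · Γ(2j+m)). -/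
/-- `m = n/2` as a real number. -/
noncomputable def mhalf (n : ℕ) : ℝ := (n : ℝ) / 2

/-- `V_n = π^{n/2} / Γ(n/2 + 1)`, the volume of the unit ball of `ℝⁿ`. -/
noncomputable def Vball (n : ℕ) : ℝ := Real.pi ^ mhalf n / Real.Gamma (mhalf n + 1)

/-- `γ_{2j} = (−1)^j π^{n/2} Γ(j) / Γ(n/2 + j)`. -/
noncomputable def gammaCoef (n j : ℕ) : ℝ :=
  (-1 : ℝ) ^ j * Real.pi ^ mhalf n * Real.Gamma j / Real.Gamma (mhalf n + j)

/-- The coefficients `c^N_{l,j,k}`. -/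
noncomputable def cCoef (n N l j k : ℕ) : ℝ :=
  -((-1 : ℝ) ^ k / Vball n) * gammaCoef n j * rbinom ((N : ℝ) + mhalf n - 1) (N - 1) *
      2 ^ k * (Nat.factorial (N - j) : ℝ) * rbinom ((l : ℝ) - 1 + mhalf n) (N - j) *
      rbinom (mhalf n + (j : ℝ) + l - N - 1) k /
    (((l : ℝ) + mhalf n - N) * (Nat.factorial (2 * N - l - 1) : ℝ) *
      (Nat.factorial (l - N - j - k) : ℝ))

/-!
Put `N = K + j + 1` and `l = N + j + k` with `0 ≤ k ≤ K`. Writing every generalized binomial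
coefficient as a quotient of Gamma values, the `k`-th summand becomes a constant multiple of
`(-1)^k binom(K, k) P(a + k) / (a + k)`, where `a = m + j` and `P(x) = (x + j + 1)_K` is a rising
factorial of degree `K`. Write `P = x Q + P(0)`: the alternating binomial sum is a `K`-th forward
difference, which kills the polynomial `Q` of degree `< K` and sends `1/x` to `(-1)^K K!/(x)_{K+1}`.
So the sum is `P(0) K!/(a)_{K+1}`, and the Gamma quotients left over cancel to the right-hand side.
-/

open Finset Polynomial fwdDiff Nat

lemma sum_range_alternating_choose_mul_eq_fwdDiff_iter {R : Type*} [CommRing R]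
    (f : R → R) (K : ℕ) (a : R) :
    ∑ k ∈ range (K + 1), (-1 : R) ^ k * K.choose k * f (a + k)
      = (-1) ^ K * (Δ_[1])^[K] f a := by
  rw [fwdDiff_iter_eq_sum_shift, mul_sum]
  refine sum_congr rfl fun k hk => ?_
  obtain ⟨d, rfl⟩ := Nat.exists_eq_add_of_le (Nat.lt_succ_iff.mp (mem_range.mp hk))
  simp only [zsmul_eq_mul, nsmul_eq_mul, mul_one, Nat.add_sub_cancel_left]
  have hsign : (-1 : R) ^ (k + d) * (-1) ^ d = (-1) ^ k := by
    rw [pow_add, mul_assoc, ← pow_add, ← two_mul, pow_mul, neg_one_sq, one_pow, mul_one]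
  push_cast
  rw [← hsign]
  ring

lemma sum_range_alternating_choose_mul_eval_eq_zero {R : Type*} [CommRing R] {P : R[X]} {K : ℕ}
    (hP : P.degree < K) (a : R) :
    ∑ k ∈ range (K + 1), (-1 : R) ^ k * K.choose k * P.eval (a + k) = 0 := by
  rw [sum_range_alternating_choose_mul_eq_fwdDiff_iter P.eval]
  rcases eq_or_ne P 0 with rfl | hP0
  · simp [Function.iterate_fixed (fwdDiff_const (1 : R) (0 : R))]
  · rw [Polynomial.fwdDiff_iter_eq_zero_of_degree_lt ((natDegree_lt_iff_degree_lt hP0).2 hP)]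
    simp

lemma ascPochhammer_eval_ne_zero {𝕜 : Type*} [Field 𝕜] {n : ℕ} {a : 𝕜}
    (ha : ∀ k < n, a + k ≠ 0) : (ascPochhammer 𝕜 n).eval a ≠ 0 := by
  rw [Ne, ascPochhammer_eval_eq_zero_iff]
  rintro ⟨k, hk, hka⟩
  exact ha k hk (by rw [hka, add_neg_cancel])

lemma fwdDiff_iter_inv {𝕜 : Type*} [Field 𝕜] (K : ℕ) (a : 𝕜) (ha : ∀ k ≤ K, a + k ≠ 0) :
    (Δ_[1])^[K] (·⁻¹) a = (-1) ^ K * K ! / (ascPochhammer 𝕜 (K + 1)).eval a := by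
  induction K generalizing a with
  | zero => simp
  | succ K ih =>
    have ha₀ : a ≠ 0 := by simpa using ha 0 (Nat.zero_le _)
    have ha' : ∀ k ≤ K, a + k ≠ 0 := fun k hk => ha k (by omega)
    have ha₁ : ∀ k ≤ K, a + 1 + k ≠ 0 := fun k hk => by
      simpa [add_assoc, add_comm (1 : 𝕜)] using ha (k + 1) (by omega)
    have hP : (ascPochhammer 𝕜 (K + 1)).eval a ≠ 0 :=
      ascPochhammer_eval_ne_zero fun k hk => ha' k (Nat.lt_succ_iff.mp hk)
    have hP₁ : (ascPochhammer 𝕜 (K + 1)).eval (a + 1) ≠ 0 :=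
      ascPochhammer_eval_ne_zero fun k hk => ha₁ k (Nat.lt_succ_iff.mp hk)
    have hK : a + (K + 1 : ℕ) ≠ 0 := ha (K + 1) le_rfl
    have hrec : (ascPochhammer 𝕜 (K + 1)).eval a * (a + (K + 1 : ℕ))
        = a * (ascPochhammer 𝕜 (K + 1)).eval (a + 1) := by
      rw [← ascPochhammer_succ_eval, ascPochhammer_succ_left, eval_mul, eval_comp]; simp
    rw [Function.iterate_succ_apply', fwdDiff, ih a ha', ih (a + 1) ha₁,
      ascPochhammer_succ_eval (K + 1) a]
    field_simp
    apply mul_left_cancel₀ ha₀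
    rw [Nat.factorial_succ]
    push_cast at hrec ⊢
    linear_combination ((-1) ^ K * K ! * (a + (K + 1)) + (-1) ^ (K + 1) * ((K + 1) * K !)) * hrec

lemma sum_range_alternating_choose_mul_eval_div {𝕜 : Type*} [Field 𝕜] {P : 𝕜[X]} {K : ℕ}
    (hP : P.degree ≤ K) (a : 𝕜) (ha : ∀ k ≤ K, a + k ≠ 0) :
    ∑ k ∈ range (K + 1), (-1 : 𝕜) ^ k * K.choose k * (P.eval (a + k) / (a + k))
      = P.eval 0 * K ! / (ascPochhammer 𝕜 (K + 1)).eval a := by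
  have hQ : (divX P).degree < K := by
    rcases eq_or_ne P 0 with rfl | hP0
    · simp
    · exact (degree_divX_lt hP0).trans_le hP
  have hsplit : ∀ k ∈ range (K + 1), (-1 : 𝕜) ^ k * K.choose k * (P.eval (a + k) / (a + k))
      = (-1) ^ k * K.choose k * (divX P).eval (a + k)
        + P.eval 0 * ((-1) ^ k * K.choose k * (a + k)⁻¹) := by
    intro k hk
    have hak := ha k (Nat.lt_succ_iff.mp (mem_range.mp hk))
    conv_lhs => rw [← divX_mul_X_add P]
    simp only [eval_add, eval_mul, eval_X, eval_C, coeff_zero_eq_eval_zero]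
    field_simp
  rw [sum_congr rfl hsplit, sum_add_distrib, ← mul_sum,
    sum_range_alternating_choose_mul_eval_eq_zero hQ,
    sum_range_alternating_choose_mul_eq_fwdDiff_iter (·⁻¹), fwdDiff_iter_inv K a ha]
  rw [zero_add, ← mul_div_assoc, ← mul_assoc, ← mul_pow, neg_one_mul, neg_neg, one_pow, one_mul,
    mul_div_assoc]

lemma Gamma_add_nat_eq_mul_ascPochhammer {z : ℝ} (hz : 0 < z) (n : ℕ) :
    Real.Gamma (z + n) = Real.Gamma z * (ascPochhammer ℝ n).eval z := by
  induction n with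
  | zero => simp
  | succ n ih =>
    rw [Nat.cast_succ, ← add_assoc, Real.Gamma_add_one (by positivity), ih,
      ascPochhammer_succ_eval]
    ring

lemma rbinom_eq_Gamma_div {z : ℝ} (hz : 0 < z) (r : ℕ) :
    rbinom (z + r - 1) r = Real.Gamma (z + r) / (r ! * Real.Gamma z) := by
  rw [rbinom, ← descPochhammer_eval_eq_prod_range, descPochhammer_eval_eq_ascPochhammer,
    show z + r - 1 - r + 1 = z by ring, Gamma_add_nat_eq_mul_ascPochhammer hz]
  field_simp [(Real.Gamma_pos_of_pos hz).ne']

lemma mhalf_nonneg (n : ℕ) : 0 ≤ mhalf n := by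
  unfold mhalf
  positivity

lemma cCoef_div_two_rpow_mul_Gamma_eq {n N j K k l : ℕ} (hj : 0 < j) (hN : N = K + j + 1)
    (hl : l = N + j + k) (hk : k ≤ K) :
    cCoef n N l j (l - N - j) /
        ((2 : ℝ) ^ (mhalf n + (l : ℝ) - N + j) * Real.Gamma (mhalf n + (l : ℝ) - N + j + 1))
      = -(gammaCoef n j * rbinom ((N : ℝ) + mhalf n - 1) (N - 1)) /
          (Vball n * 2 ^ mhalf n * 4 ^ j * Real.Gamma (mhalf n + 2 * j) * K !) *
        ((-1) ^ k * K.choose k *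
          (((ascPochhammer ℝ K).comp (X + C ((j : ℝ) + 1))).eval (mhalf n + j + k) /
            (mhalf n + j + k))) := by
  have hm := mhalf_nonneg n
  set m := mhalf n
  have hl' : (l : ℝ) = K + 2 * j + k + 1 := by rw [hl, hN]; push_cast; ring
  have hN' : (N : ℝ) = K + j + 1 := by rw [hN]; push_cast; ring
  have hj' : (0 : ℝ) < j := by exact_mod_cast hj
  unfold cCoef
  rw [show l - N - j = k by omega, show N - j = K + 1 by omega, show 2 * N - l - 1 = K - k by omega,
    Nat.sub_self, Nat.factorial_zero,
    show (l : ℝ) - 1 + m = (m + 2 * j + k) + (K + 1 : ℕ) - 1 by push_cast; rw [hl']; ring,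
    rbinom_eq_Gamma_div (by positivity),
    show m + j + l - N - 1 = (m + 2 * j) + k - 1 by rw [hl', hN']; ring,
    rbinom_eq_Gamma_div (by positivity),
    show m + l - N + j + 1 = (m + 2 * j + k) + 1 by rw [hl', hN']; ring,
    Real.Gamma_add_one (by positivity),
    show m + 2 * j + k + (K + 1 : ℕ) = (m + 2 * j + k + 1) + K by push_cast; ring,
    Gamma_add_nat_eq_mul_ascPochhammer (by positivity),
    Real.Gamma_add_one (by positivity),
    show m + l - N + j = m + (2 * j + k : ℕ) by rw [hl', hN']; push_cast; ring,
    Real.rpow_add two_pos, Real.rpow_natCast, pow_add, pow_mul,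
    show (l : ℝ) + m - N = m + j + k by rw [hl', hN']; ring,
    Nat.cast_choose ℝ hk]
  simp only [eval_comp, eval_add, eval_X, eval_C]
  rw [show m + j + k + (j + 1) = m + 2 * j + k + 1 by ring]
  have hV : Vball n ≠ 0 := by unfold Vball; positivity
  have hΓ : 0 < Real.Gamma (m + 2 * j) := Real.Gamma_pos_of_pos (by positivity)
  have hΓ' : 0 < Real.Gamma (m + 2 * j + k) := Real.Gamma_pos_of_pos (by positivity)
  field_simp
  ring

lemma prefactor_mul_eval_zero_div_ascPochhammer_eq {n N j K : ℕ} (hj : 0 < j)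
    (hN : N = K + j + 1) :
    -(gammaCoef n j * rbinom ((N : ℝ) + mhalf n - 1) (N - 1)) /
          (Vball n * 2 ^ mhalf n * 4 ^ j * Real.Gamma (mhalf n + 2 * j) * K !) *
        (((ascPochhammer ℝ K).comp (X + C ((j : ℝ) + 1))).eval 0 * K ! /
          (ascPochhammer ℝ (K + 1)).eval (mhalf n + j))
      = -(Real.pi ^ mhalf n / (Vball n * (2 : ℝ) ^ mhalf n * Real.Gamma (mhalf n + 1))) *
          ((-1 : ℝ) ^ j / ((j : ℝ) * 4 ^ j * Real.Gamma (2 * (j : ℝ) + mhalf n))) := by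
  unfold gammaCoef
  have hm := mhalf_nonneg n
  set m := mhalf n
  have hj' : (0 : ℝ) < j := by exact_mod_cast hj
  have hP0 : ((ascPochhammer ℝ K).comp (X + C ((j : ℝ) + 1))).eval 0 = (K + j) ! / j ! := by
    rw [eval_comp, eval_add, eval_X, eval_C, zero_add, eq_div_iff (by positivity),
      show (j : ℝ) + 1 = ((j + 1 : ℕ) : ℝ) by push_cast; ring, ← cast_ascFactorial,
      ← Nat.cast_mul, mul_comm, Nat.factorial_mul_ascFactorial, add_comm]
  have hΓN :
      Real.Gamma (m + N) = Real.Gamma (m + j) * (ascPochhammer ℝ (K + 1)).eval (m + j) := by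
    rw [← Gamma_add_nat_eq_mul_ascPochhammer (by positivity), hN]; push_cast; ring_nf
  have hbinom : rbinom ((N : ℝ) + m - 1) (N - 1)
      = Real.Gamma (m + N) / ((K + j) ! * Real.Gamma (m + 1)) := by
    rw [show N - 1 = K + j by omega, show (N : ℝ) + m - 1 = (m + 1) + (K + j : ℕ) - 1 by
      rw [hN]; push_cast; ring, rbinom_eq_Gamma_div (by positivity)]
    rw [hN]; push_cast; ring_nf
  have hΓj : Real.Gamma j * j = j ! := by
    rw [mul_comm, ← Real.Gamma_add_one hj'.ne', Real.Gamma_nat_eq_factorial]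
  rw [hP0, hbinom, hΓN, show 2 * (j : ℝ) + m = m + 2 * j by ring, ← hΓj]
  have hV : Vball n ≠ 0 := by unfold Vball; positivity
  have h1 : 0 < Real.Gamma (m + j) := Real.Gamma_pos_of_pos (by positivity)
  have h2 : 0 < Real.Gamma (m + 2 * j) := Real.Gamma_pos_of_pos (by positivity)
  have h3 : 0 < Real.Gamma (m + 1) := Real.Gamma_pos_of_pos (by positivity)
  have h4 : (ascPochhammer ℝ (K + 1)).eval (m + j) ≠ 0 :=
    (ascPochhammer_pos _ _ (by positivity)).ne'
  have h5 : 0 < Real.Gamma j := Real.Gamma_pos_of_pos hj'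
  field_simp

theorem statement15_general (n : ℕ) (N j : ℕ) (hj : 1 ≤ j)
    (hj2 : j ≤ N - 1) :
    ∑ l ∈ Finset.Icc (N + j) (2 * N - 1),
        cCoef n N l j (l - N - j) /
          ((2 : ℝ) ^ (mhalf n + (l : ℝ) - N + j) *
            Real.Gamma (mhalf n + (l : ℝ) - N + j + 1))
      = -(Real.pi ^ mhalf n / (Vball n * (2 : ℝ) ^ mhalf n * Real.Gamma (mhalf n + 1))) *
          ((-1 : ℝ) ^ j / ((j : ℝ) * 4 ^ j * Real.Gamma (2 * (j : ℝ) + mhalf n))) := by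
  obtain ⟨K, hN⟩ : ∃ K, N = K + j + 1 := ⟨N - 1 - j, by omega⟩
  have hIcc : Icc (N + j) (2 * N - 1) = Ico (N + j) (N + j + (K + 1)) := by
    ext l; simp only [mem_Icc, mem_Ico]; omega
  rw [hIcc, sum_Ico_eq_sum_range, Nat.add_sub_cancel_left,
    sum_congr rfl fun k hk =>
      cCoef_div_two_rpow_mul_Gamma_eq hj hN rfl (Nat.lt_succ_iff.mp (mem_range.mp hk)),
    ← mul_sum, sum_range_alternating_choose_mul_eval_div ?_ _ fun k _ => ?_]
  · exact prefactor_mul_eval_zero_div_ascPochhammer_eq hj hN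
  · exact degree_le_of_natDegree_le (by
      rw [natDegree_comp, ascPochhammer_natDegree, natDegree_X_add_C, mul_one])
  · have hm := mhalf_nonneg n
    have hj' : (0 : ℝ) < j := by exact_mod_cast hj
    positivity

/-- For all integers `N ≥ 2` and `1 ≤ j ≤ N−1`,
`Σ_{l=N+j}^{2N−1} c^N_{l,j,l−N−j} / (2^{m+l−N+j} Γ(m+l−N+j+1))
 = −(π^m/(V_n 2^m Γ(m+1))) · (−1)^j/(j 4^j Γ(2j+m))`. -/
theorem statement15 (n : ℕ) (hn : 1 ≤ n) (N j : ℕ) (hN : 2 ≤ N) (hj : 1 ≤ j)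
    (hj2 : j ≤ N - 1) :
    ∑ l ∈ Finset.Icc (N + j) (2 * N - 1),
        cCoef n N l j (l - N - j) /
          ((2 : ℝ) ^ (mhalf n + (l : ℝ) - N + j) *
            Real.Gamma (mhalf n + (l : ℝ) - N + j + 1))
      = -(Real.pi ^ mhalf n / (Vball n * (2 : ℝ) ^ mhalf n * Real.Gamma (mhalf n + 1))) *
          ((-1 : ℝ) ^ j / ((j : ℝ) * 4 ^ j * Real.Gamma (2 * (j : ℝ) + mhalf n))) :=
  statement15_general n N j hj hj2
end
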